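/- arXiv:2402.12569 — 9 statements merged into one kernel-verified Lean document; each statement's English description precedes it below -/
import Mathlib

section
/- Let A, B, C be nonempty finite types with decidable equality, and write d_A = Fintype.card A, d_B = Fintype.card B. Let F₁ be a set of matrices in Matrix (B × A) (B × A) ℂ, F₃ a set of matrices in Matrix (C × A) (C × A) ℂ, and F₄ a set of matrices in Matrix ((C × A) × (B × A)) ((C × A) × (B × A)) ℂ. Let μ ∈ F₁ and let ν : Matrix (C × B) (C × B) ℂ satisfy tr₁ ν = (d_B : ℂ)⁻¹ • 1. Define ν̃ : Matrix ((C × A) × (B × A)) ((C × A) × (B × A)) ℂ by ν̃ ((c,a),(b,a₀)) ((c',a'),(b',a₀')) = (d_A : ℂ)⁻¹ * ν (c,b) (c',b') * (if a = a₀ ∧ a' = a₀' then 1 else 0). Assume (i) ν̃ ∈ F₄, and (ii) for every τ ∈ F₄ with tr₁ τ = ((d_B * d_A : ℕ) : ℂ)⁻¹ • 1 and every σ ∈ F₁, the matrix ((d_B * d_A : ℕ) : ℂ) • (τ ⋆ σ) belongs to F₃. Then (d_B : ℂ) • (ν ⋆ μ) ∈ F₃. (This is the sequential-composition step in the sufficiency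 direction of Theorem 1: the renormalized Choi matrix of the composite of two Choi-defined operations is again a free state.) -/
/-!
The matrix `ν̃` is `d_A⁻¹` times the Choi matrix of `𝒩 ⊗ id_A`, where `ν` is the Choi matrix
of `𝒩`. Its partial trace is `tr₁ ν ⊗ 1 = (d_B d_A)⁻¹ • 1`, and linking it with `μ` gives
`d_A⁻¹ • (ν ⋆ μ)`, so hypothesis (ii) applied to `ν̃` and `μ` yields the claim.
-/

open Matrix Kronecker BigOperators

/-- Partial trace over the first tensor factor. -/
noncomputable def tr₁ {X Y : Type*} [Fintype X] (M : Matrix (X × Y) (X × Y) ℂ) : Matrix Y Y ℂ :=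
  Matrix.of fun y y' => ∑ x, M (x, y) (x, y')

/-- Link product of a bipartite matrix with a state. -/
noncomputable def linkState {S T : Type*} [Fintype T] (N : Matrix (S × T) (S × T) ℂ)
    (ρ : Matrix T T ℂ) : Matrix S S ℂ :=
  Matrix.of fun s s' => ∑ t, ∑ t', N (s, t) (s', t') * ρ t t'

/-- Link product of two Choi matrices. -/
noncomputable def linkChoi {A B C : Type*} [Fintype B] (N : Matrix (C × B) (C × B) ℂ)
    (M : Matrix (B × A) (B × A) ℂ) : Matrix (C × A) (C × A) ℂ :=
  Matrix.of fun p q => ∑ b, ∑ b', N (p.1, b) (q.1, b') * M (b, p.2) (b', q.2)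

theorem tr₁_smul {X Y : Type*} [Fintype X] (r : ℂ) (M : Matrix (X × Y) (X × Y) ℂ) :
    tr₁ (r • M) = r • tr₁ M := by
  ext y y'
  simp [tr₁, Finset.mul_sum]

theorem linkState_smul {S T : Type*} [Fintype T] (r : ℂ) (N : Matrix (S × T) (S × T) ℂ)
    (ρ : Matrix T T ℂ) : linkState (r • N) ρ = r • linkState N ρ := by
  ext s s'
  simp [linkState, Finset.mul_sum, mul_assoc]

section ChoiTensorId

variable {A B C : Type*} [DecidableEq A]

variable (A) in
/-- The unnormalized Choi matrix of `𝒩 ⊗ id_A` for a channel `𝒩 : B → C` with Choi matrix `ν`: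
`ν` tensored with the unnormalized maximally entangled projector on `A × A`, with the output
factors grouped as `C × A` and the input factors as `B × A`. -/
def choiTensorId (ν : Matrix (C × B) (C × B) ℂ) :
    Matrix ((C × A) × (B × A)) ((C × A) × (B × A)) ℂ :=
  Matrix.of fun p q =>
    ν (p.1.1, p.2.1) (q.1.1, q.2.1) * if p.1.2 = p.2.2 ∧ q.1.2 = q.2.2 then 1 else 0

theorem tr₁_choiTensorId [Fintype A] [Fintype C] (ν : Matrix (C × B) (C × B) ℂ) :
    tr₁ (choiTensorId A ν) = tr₁ ν ⊗ₖ (1 : Matrix A A ℂ) := by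
  ext ⟨b, a₀⟩ ⟨b', a₀'⟩
  simp only [tr₁, choiTensorId, of_apply, kroneckerMap_apply, one_apply, Fintype.sum_prod_type]
  rw [Finset.sum_mul]
  refine Finset.sum_congr rfl fun c _ => ?_
  by_cases h : a₀ = a₀'
  · simp [h]
  · simp only [h, if_false, mul_zero]
    exact Finset.sum_eq_zero fun a _ => by
      rw [if_neg fun ha => h (ha.1.symm.trans ha.2), mul_zero]

theorem linkState_choiTensorId [Fintype A] [Fintype B] (ν : Matrix (C × B) (C × B) ℂ)
    (μ : Matrix (B × A) (B × A) ℂ) : linkState (choiTensorId A ν) μ = linkChoi ν μ := by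
  ext ⟨c, a⟩ ⟨c', a'⟩
  simp only [linkState, linkChoi, choiTensorId, of_apply, Fintype.sum_prod_type]
  refine Finset.sum_congr rfl fun b _ => ?_
  rw [Finset.sum_comm]
  refine Finset.sum_congr rfl fun b' _ => ?_
  simp [ite_and]

end ChoiTensorId

theorem stmt0_general {A B C : Type*} [Fintype A] [Fintype B] [Fintype C]
    [Nonempty A]
    [DecidableEq A] [DecidableEq B]
    (F₁ : Set (Matrix (B × A) (B × A) ℂ)) (F₃ : Set (Matrix (C × A) (C × A) ℂ))
    (F₄ : Set (Matrix ((C × A) × (B × A)) ((C × A) × (B × A)) ℂ))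
    (μ : Matrix (B × A) (B × A) ℂ) (hμ : μ ∈ F₁)
    (ν : Matrix (C × B) (C × B) ℂ)
    (hν : tr₁ ν = (Fintype.card B : ℂ)⁻¹ • (1 : Matrix B B ℂ))
    (νt : Matrix ((C × A) × (B × A)) ((C × A) × (B × A)) ℂ)
    (hνt : ∀ (c : C) (a : A) (b : B) (a₀ : A) (c' : C) (a' : A) (b' : B) (a₀' : A),
      νt ((c, a), (b, a₀)) ((c', a'), (b', a₀')) =
        (Fintype.card A : ℂ)⁻¹ * ν (c, b) (c', b') *
          (if a = a₀ ∧ a' = a₀' then 1 else 0))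
    (hmem : νt ∈ F₄)
    (hclosed : ∀ τ ∈ F₄,
      tr₁ τ = ((Fintype.card B * Fintype.card A : ℕ) : ℂ)⁻¹ •
          (1 : Matrix (B × A) (B × A) ℂ) →
        ∀ σ ∈ F₁, ((Fintype.card B * Fintype.card A : ℕ) : ℂ) • linkState τ σ ∈ F₃) :
    (Fintype.card B : ℂ) • linkChoi ν μ ∈ F₃ := by
  have hA : (Fintype.card A : ℂ) ≠ 0 := Nat.cast_ne_zero.2 Fintype.card_ne_zero
  have hνt_eq : νt = (Fintype.card A : ℂ)⁻¹ • choiTensorId A ν := by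
    ext ⟨⟨c, a⟩, b, a₀⟩ ⟨⟨c', a'⟩, b', a₀'⟩
    simp [hνt, choiTensorId]
  have htr : tr₁ νt = ((Fintype.card B * Fintype.card A : ℕ) : ℂ)⁻¹ •
      (1 : Matrix (B × A) (B × A) ℂ) := by
    rw [hνt_eq, tr₁_smul, tr₁_choiTensorId, hν, smul_kronecker, one_kronecker_one, smul_smul,
      Nat.cast_mul, mul_inv, mul_comm]
  have hlink := hclosed νt hmem htr μ hμ
  rwa [hνt_eq, linkState_smul, linkState_choiTensorId, smul_smul, Nat.cast_mul, mul_assoc,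
    mul_inv_cancel₀ hA, mul_one] at hlink

theorem stmt0 {A B C : Type*} [Fintype A] [Fintype B] [Fintype C]
    [Nonempty A] [Nonempty B] [Nonempty C]
    [DecidableEq A] [DecidableEq B] [DecidableEq C]
    (F₁ : Set (Matrix (B × A) (B × A) ℂ)) (F₃ : Set (Matrix (C × A) (C × A) ℂ))
    (F₄ : Set (Matrix ((C × A) × (B × A)) ((C × A) × (B × A)) ℂ))
    (μ : Matrix (B × A) (B × A) ℂ) (hμ : μ ∈ F₁)
    (ν : Matrix (C × B) (C × B) ℂ)
    (hν : tr₁ ν = (Fintype.card B : ℂ)⁻¹ • (1 : Matrix B B ℂ))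
    (νt : Matrix ((C × A) × (B × A)) ((C × A) × (B × A)) ℂ)
    (hνt : ∀ (c : C) (a : A) (b : B) (a₀ : A) (c' : C) (a' : A) (b' : B) (a₀' : A),
      νt ((c, a), (b, a₀)) ((c', a'), (b', a₀')) =
        (Fintype.card A : ℂ)⁻¹ * ν (c, b) (c', b') *
          (if a = a₀ ∧ a' = a₀' then 1 else 0))
    (hmem : νt ∈ F₄)
    (hclosed : ∀ τ ∈ F₄,
      tr₁ τ = ((Fintype.card B * Fintype.card A : ℕ) : ℂ)⁻¹ •
          (1 : Matrix (B × A) (B × A) ℂ) →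
        ∀ σ ∈ F₁, ((Fintype.card B * Fintype.card A : ℕ) : ℂ) • linkState τ σ ∈ F₃) :
    (Fintype.card B : ℂ) • linkChoi ν μ ∈ F₃ :=
  stmt0_general F₁ F₃ F₄ μ hμ ν hν νt hνt hmem hclosed
end

section
/- Let A, B, C, D be nonempty finite types with decidable equality. Let 𝓜 : Matrix A A ℂ →ₗ[ℂ] Matrix B B ℂ and 𝓝 : Matrix C C ℂ →ₗ[ℂ] Matrix D D ℂ be linear maps, and let 𝓣 : Matrix (A × C) (A × C) ℂ →ₗ[ℂ] Matrix (B × D) (B × D) ℂ be a linear map satisfying 𝓣 (X ⊗ₖ Y) = (𝓜 X) ⊗ₖ (𝓝 Y) for all X : Matrix A A ℂ and Y : Matrix C C ℂ. Then for all indices, C(𝓣) ((b,d),(a,c)) ((b',d'),(a',c')) = C(𝓜) (b,a) (b',a') * C(𝓝) (d,c) (d',c'). In other words, the Choi matrix of the parallel composition 𝓜 ⊗ 𝓝 is the swap tensor product of the Choi matrices of 𝓜 and 𝓝. -/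
open Matrix Kronecker BigOperators

/-- The Choi matrix of a linear map on matrices. -/
noncomputable def choiMatrix {A B : Type*} [Fintype A] [DecidableEq A]
    (E : Matrix A A ℂ →ₗ[ℂ] Matrix B B ℂ) : Matrix (B × A) (B × A) ℂ :=
  Matrix.of fun p q => E (Matrix.single p.2 q.2 1) p.1 q.1

theorem stmt1_general {A B C D : Type*} [Fintype A] [Fintype C]
    [DecidableEq A] [DecidableEq C]
    (M : Matrix A A ℂ →ₗ[ℂ] Matrix B B ℂ) (N : Matrix C C ℂ →ₗ[ℂ] Matrix D D ℂ)
    (T : Matrix (A × C) (A × C) ℂ →ₗ[ℂ] Matrix (B × D) (B × D) ℂ)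
    (hT : ∀ (X : Matrix A A ℂ) (Y : Matrix C C ℂ), T (X ⊗ₖ Y) = (M X) ⊗ₖ (N Y)) :
    ∀ (b b' : B) (d d' : D) (a a' : A) (c c' : C),
      choiMatrix T ((b, d), (a, c)) ((b', d'), (a', c')) =
        choiMatrix M (b, a) (b', a') * choiMatrix N (d, c) (d', c') := by
  intro b b' d d' a a' c c'
  have hsingle : single (a, c) (a', c') (1 : ℂ) = single a a' 1 ⊗ₖ single c c' 1 := by
    rw [single_kronecker_single, mul_one]
  simp only [choiMatrix, of_apply, hsingle, hT, kroneckerMap_apply]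

theorem stmt1 {A B C D : Type*} [Fintype A] [Fintype B] [Fintype C] [Fintype D]
    [Nonempty A] [Nonempty B] [Nonempty C] [Nonempty D]
    [DecidableEq A] [DecidableEq B] [DecidableEq C] [DecidableEq D]
    (M : Matrix A A ℂ →ₗ[ℂ] Matrix B B ℂ) (N : Matrix C C ℂ →ₗ[ℂ] Matrix D D ℂ)
    (T : Matrix (A × C) (A × C) ℂ →ₗ[ℂ] Matrix (B × D) (B × D) ℂ)
    (hT : ∀ (X : Matrix A A ℂ) (Y : Matrix C C ℂ), T (X ⊗ₖ Y) = (M X) ⊗ₖ (N Y)) :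
    ∀ (b b' : B) (d d' : D) (a a' : A) (c c' : C),
      choiMatrix T ((b, d), (a, c)) ((b', d'), (a', c')) =
        choiMatrix M (b, a) (b', a') * choiMatrix N (d, c) (d', c') :=
  stmt1_general M N T hT
end

section
/- Let A, B be nonempty finite types with decidable equality and d_A = Fintype.card A. Let F be a set of matrices in Matrix (A × A) (A × A) ℂ and G a set of matrices in Matrix (B × A) (B × A) ℂ. Let 𝓜 : Matrix A A ℂ →ₗ[ℂ] Matrix B B ℂ be a linear map, and for ρ : Matrix (A × A) (A × A) ℂ define its extension (𝓜 ⊗ id)(ρ) : Matrix (B × A) (B × A) ℂ by [(𝓜 ⊗ id)(ρ)] (b, a₂) (b', a₂') = ∑ a₁ a₁', 𝓜 (Matrix.stdBasisMatrix a₁ a₁' 1) b b' * ρ (a₁, a₂) (a₁', a₂'). Assume (i) (d_A : ℂ)⁻¹ • Φ_A ∈ F, and (ii) 𝓜 is completely resource non-generating in the sense that (𝓜 ⊗ id)(ρ) ∈ G for every ρ ∈ F. Then the renormalized Choi matrix (d_A : ℂ)⁻¹ • C(𝓜) belongs to G. (Theorem 2: in every Choi-defined resource theory, completely resource-non-generating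 operations are Choi-defined operations.) -/
open Matrix Kronecker BigOperators

/-- The (unnormalized) Choi state on `A × A`. -/
noncomputable def choiState (A : Type*) [Fintype A] [DecidableEq A] :
    Matrix (A × A) (A × A) ℂ :=
  Matrix.of fun p q => if p.1 = p.2 ∧ q.1 = q.2 then 1 else 0

/-- The extension `𝓜 ⊗ id` of a linear map `𝓜`, acting on bipartite matrices. -/
noncomputable def extMap {A B : Type*} [Fintype A] [DecidableEq A]
    (M : Matrix A A ℂ →ₗ[ℂ] Matrix B B ℂ)
    (ρ : Matrix (A × A) (A × A) ℂ) : Matrix (B × A) (B × A) ℂ :=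
  Matrix.of fun p q =>
    ∑ a₁, ∑ a₁', M (Matrix.single a₁ a₁' 1) p.1 q.1 * ρ (a₁, p.2) (a₁', q.2)

theorem extMap_smul {A B : Type*} [Fintype A] [DecidableEq A]
    (M : Matrix A A ℂ →ₗ[ℂ] Matrix B B ℂ) (c : ℂ) (ρ : Matrix (A × A) (A × A) ℂ) :
    extMap M (c • ρ) = c • extMap M ρ := by
  ext p q
  simp only [extMap, Matrix.of_apply, Matrix.smul_apply, smul_eq_mul, Finset.mul_sum]
  exact Finset.sum_congr rfl fun _ _ => Finset.sum_congr rfl fun _ _ => mul_left_comm _ _ _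

theorem extMap_choiState {A B : Type*} [Fintype A] [DecidableEq A]
    (M : Matrix A A ℂ →ₗ[ℂ] Matrix B B ℂ) :
    extMap M (choiState A) = choiMatrix M := by
  ext ⟨b, a₂⟩ ⟨b', a₂'⟩
  simp [extMap, choiState, choiMatrix, ite_and, Finset.sum_ite_eq']

theorem stmt3_general {A B : Type*} [Fintype A]
    [DecidableEq A]
    (F : Set (Matrix (A × A) (A × A) ℂ)) (G : Set (Matrix (B × A) (B × A) ℂ))
    (M : Matrix A A ℂ →ₗ[ℂ] Matrix B B ℂ)
    (h1 : (Fintype.card A : ℂ)⁻¹ • choiState A ∈ F)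
    (h2 : ∀ ρ ∈ F, extMap M ρ ∈ G) :
    (Fintype.card A : ℂ)⁻¹ • choiMatrix M ∈ G := by
  rw [← extMap_choiState, ← extMap_smul]
  exact h2 _ h1

theorem stmt3 {A B : Type*} [Fintype A] [Fintype B] [Nonempty A] [Nonempty B]
    [DecidableEq A] [DecidableEq B]
    (F : Set (Matrix (A × A) (A × A) ℂ)) (G : Set (Matrix (B × A) (B × A) ℂ))
    (M : Matrix A A ℂ →ₗ[ℂ] Matrix B B ℂ)
    (h1 : (Fintype.card A : ℂ)⁻¹ • choiState A ∈ F)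
    (h2 : ∀ ρ ∈ F, extMap M ρ ∈ G) :
    (Fintype.card A : ℂ)⁻¹ • choiMatrix M ∈ G :=
  stmt3_general F G M h1 h2
end

section
/- Let A, B, C be finite types with decidable equality, and let 𝓜 : Matrix A A ℂ →ₗ[ℂ] Matrix B B ℂ and 𝓝 : Matrix B B ℂ →ₗ[ℂ] Matrix C C ℂ be linear maps. Then the Choi matrix of the sequential composition 𝓝 ∘ₗ 𝓜 is the link product of the Choi matrices: for all c, c' : C and a, a' : A, C(𝓝 ∘ₗ 𝓜) (c, a) (c', a') = ∑ b b', C(𝓝) (c, b) (c', b') * C(𝓜) (b, a) (b', a'). -/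
open Matrix Kronecker BigOperators

theorem LinearMap.apply_eq_sum_smul_single {R m n M : Type*} [Semiring R] [AddCommMonoid M]
    [Module R M] [Fintype m] [Fintype n] [DecidableEq m] [DecidableEq n]
    (f : Matrix m n R →ₗ[R] M) (X : Matrix m n R) :
    f X = ∑ i, ∑ j, X i j • f (Matrix.single i j 1) := by
  conv_lhs => rw [matrix_eq_sum_single X]
  simp only [map_sum, ← map_smul, smul_single, smul_eq_mul, mul_one]

theorem choiMatrix_apply {A B : Type*} [Fintype A] [DecidableEq A]
    (E : Matrix A A ℂ →ₗ[ℂ] Matrix B B ℂ) (b b' : B) (a a' : A) :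
    choiMatrix E (b, a) (b', a') = E (single a a' 1) b b' :=
  rfl

theorem apply_eq_sum_mul_choiMatrix {A B : Type*} [Fintype A] [DecidableEq A]
    (E : Matrix A A ℂ →ₗ[ℂ] Matrix B B ℂ) (X : Matrix A A ℂ) (b b' : B) :
    E X b b' = ∑ a, ∑ a', X a a' * choiMatrix E (b, a) (b', a') := by
  rw [E.apply_eq_sum_smul_single X]
  simp only [Matrix.sum_apply, Matrix.smul_apply, smul_eq_mul, choiMatrix_apply]

theorem stmt4_general {A B C : Type*} [Fintype A] [Fintype B]
    [DecidableEq A] [DecidableEq B]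
    (M : Matrix A A ℂ →ₗ[ℂ] Matrix B B ℂ) (N : Matrix B B ℂ →ₗ[ℂ] Matrix C C ℂ) :
    ∀ (c c' : C) (a a' : A),
      choiMatrix (N ∘ₗ M) (c, a) (c', a') =
        ∑ b, ∑ b', choiMatrix N (c, b) (c', b') * choiMatrix M (b, a) (b', a') := by
  intro c c' a a'
  rw [choiMatrix_apply, LinearMap.comp_apply, apply_eq_sum_mul_choiMatrix]
  simp only [← choiMatrix_apply M, mul_comm]

theorem stmt4 {A B C : Type*} [Fintype A] [Fintype B] [Fintype C]
    [DecidableEq A] [DecidableEq B] [DecidableEq C]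
    (M : Matrix A A ℂ →ₗ[ℂ] Matrix B B ℂ) (N : Matrix B B ℂ →ₗ[ℂ] Matrix C C ℂ) :
    ∀ (c c' : C) (a a' : A),
      choiMatrix (N ∘ₗ M) (c, a) (c', a') =
        ∑ b, ∑ b', choiMatrix N (c, b) (c', b') * choiMatrix M (b, a) (b', a') :=
  stmt4_general M N
end

section
/- Let A be a nonempty finite type with decidable equality and let U be a unitary matrix in Matrix A A ℂ (i.e., U ∈ Matrix.unitaryGroup A ℂ). Then the Choi vector is invariant under U ⊗ U if and only if U is real in the chosen basis, in the sense that (U ⊗ₖ U).mulVec φ_A = φ_A ↔ U * Uᵀ = 1. -/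
open Matrix Kronecker BigOperators

/-- The (unnormalized) Choi vector on `A × A`. -/
noncomputable def choiVec (A : Type*) [DecidableEq A] : A × A → ℂ :=
  fun p => if p.1 = p.2 then 1 else 0

theorem stmt9 {A : Type*} [Fintype A] [Nonempty A] [DecidableEq A]
    (U : Matrix.unitaryGroup A ℂ) :
    ((U : Matrix A A ℂ) ⊗ₖ (U : Matrix A A ℂ)).mulVec (choiVec A) = choiVec A ↔
      (U : Matrix A A ℂ) * (U : Matrix A A ℂ)ᵀ = 1 := by
  have key : ∀ a b : A,
      (((U : Matrix A A ℂ) ⊗ₖ (U : Matrix A A ℂ)).mulVec (choiVec A)) (a, b) =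
        ((U : Matrix A A ℂ) * (U : Matrix A A ℂ)ᵀ) a b := by
    intro a b
    simp [Matrix.mulVec, dotProduct, choiVec, Matrix.mul_apply,
      Fintype.sum_prod_type, Matrix.kroneckerMap_apply, mul_ite, mul_zero, mul_one]
  constructor
  · intro h
    ext a b
    rw [← key a b, h]
    simp [choiVec, Matrix.one_apply]
  · intro h
    funext p
    obtain ⟨a, b⟩ := p
    rw [key a b, h]
    simp [choiVec, Matrix.one_apply]
end

section
/- Let A, B be finite types with decidable equality, let U_B ∈ Matrix.unitaryGroup B ℂ and U ∈ Matrix.unitaryGroup A ℂ. Let μ : Matrix (B × A) (B × A) ℂ and ρ : Matrix A A ℂ satisfy the invariance conditions (U_B ⊗ₖ U) * μ * (U_B ⊗ₖ U)ᴴ = μ and U * ρ * Uᴴ = ρ, and assume the Choi vector is invariant: (U ⊗ₖ U).mulVec φ_A = φ_A. Then the link product is invariant under U_B: U_B * (μ ⋆ ρ) * U_Bᴴ = μ ⋆ ρ. (This is the closure of G-invariant states under the link product, which makes a resource theory of asymmetry with free Choi state a Choi-defined resource theory.) -/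
open Matrix Kronecker BigOperators

private lemma sum_rot {α β γ : Type*} [Fintype α] [Fintype β] [Fintype γ] (f : α → β → γ → ℂ) :
    ∑ a, ∑ b, ∑ c, f a b c = ∑ c, ∑ a, ∑ b, f a b c :=
  (Finset.sum_congr rfl fun _ _ => Finset.sum_comm).trans Finset.sum_comm

private lemma kron_conjT {S T : Type*} (A : Matrix S S ℂ) (B : Matrix T T ℂ) :
    (A ⊗ₖ B)ᴴ = Aᴴ ⊗ₖ Bᴴ := by
  ext ⟨a, b⟩ ⟨c, d⟩
  simp [conjTranspose_apply, kroneckerMap_apply, mul_comm]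

section aux
variable {S T : Type*} [Fintype S] [Fintype T] [DecidableEq S] [DecidableEq T]

omit [DecidableEq S] in
private lemma lA (P : Matrix S S ℂ) (M : Matrix (S × T) (S × T) ℂ) (ρ : Matrix T T ℂ) :
    linkState ((P ⊗ₖ (1 : Matrix T T ℂ)) * M) ρ = P * linkState M ρ := by
  ext s s'
  simp only [linkState, Matrix.mul_apply, Matrix.of_apply, Matrix.kroneckerMap_apply,
    Fintype.sum_prod_type, Matrix.one_apply, ite_mul, one_mul, zero_mul, mul_ite, mul_zero,
    mul_one, Finset.sum_ite_eq, Finset.sum_ite_eq', Finset.sum_ite_irrel, Finset.sum_const_zero,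
    Finset.mem_univ, if_true, Finset.sum_mul, Finset.mul_sum]
  rw [sum_rot]
  exact Finset.sum_congr rfl fun _ _ => Finset.sum_congr rfl fun _ _ =>
    Finset.sum_congr rfl fun _ _ => by ring

omit [DecidableEq S] in
private lemma lB (P' : Matrix S S ℂ) (M : Matrix (S × T) (S × T) ℂ) (ρ : Matrix T T ℂ) :
    linkState (M * (P' ⊗ₖ (1 : Matrix T T ℂ))) ρ = linkState M ρ * P' := by
  ext s s'
  simp only [linkState, Matrix.mul_apply, Matrix.of_apply, Matrix.kroneckerMap_apply,
    Fintype.sum_prod_type, Matrix.one_apply, ite_mul, one_mul, zero_mul, mul_ite, mul_zero,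
    mul_one, Finset.sum_ite_eq, Finset.sum_ite_eq', Finset.sum_ite_irrel, Finset.sum_const_zero,
    Finset.mem_univ, if_true, Finset.sum_mul, Finset.mul_sum]
  rw [sum_rot]
  exact Finset.sum_congr rfl fun _ _ => Finset.sum_congr rfl fun _ _ =>
    Finset.sum_congr rfl fun _ _ => by ring

omit [DecidableEq T] in
private lemma lC (Q : Matrix T T ℂ) (M : Matrix (S × T) (S × T) ℂ) (ρ : Matrix T T ℂ) :
    linkState (((1 : Matrix S S ℂ) ⊗ₖ Q) * M) ρ = linkState M (Qᵀ * ρ) := by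
  ext s s'
  simp only [linkState, Matrix.mul_apply, Matrix.of_apply, Matrix.kroneckerMap_apply,
    Fintype.sum_prod_type, Matrix.one_apply, Matrix.transpose_apply, ite_mul, one_mul, zero_mul,
    mul_ite, mul_zero, mul_one, Finset.sum_ite_eq, Finset.sum_ite_eq', Finset.sum_ite_irrel,
    Finset.sum_const_zero, Finset.mem_univ, if_true, Finset.sum_mul, Finset.mul_sum]
  rw [sum_rot]
  refine Finset.sum_congr rfl fun e _ => ?_
  rw [Finset.sum_comm]
  exact Finset.sum_congr rfl fun _ _ => Finset.sum_congr rfl fun _ _ => by ring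

omit [DecidableEq T] in
private lemma lD (Q' : Matrix T T ℂ) (M : Matrix (S × T) (S × T) ℂ) (ρ : Matrix T T ℂ) :
    linkState (M * ((1 : Matrix S S ℂ) ⊗ₖ Q')) ρ = linkState M (ρ * Q'ᵀ) := by
  ext s s'
  simp only [linkState, Matrix.mul_apply, Matrix.of_apply, Matrix.kroneckerMap_apply,
    Fintype.sum_prod_type, Matrix.one_apply, Matrix.transpose_apply, ite_mul, one_mul, zero_mul,
    mul_ite, mul_zero, mul_one, Finset.sum_ite_eq, Finset.sum_ite_eq', Finset.sum_ite_irrel,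
    Finset.sum_const_zero, Finset.mem_univ, if_true, Finset.sum_mul, Finset.mul_sum]
  refine Finset.sum_congr rfl fun t _ => ?_
  rw [Finset.sum_comm]
  exact Finset.sum_congr rfl fun _ _ => Finset.sum_congr rfl fun _ _ => by ring

end aux

theorem stmt10 {A B : Type*} [Fintype A] [Fintype B] [DecidableEq A] [DecidableEq B]
    (UB : Matrix.unitaryGroup B ℂ) (U : Matrix.unitaryGroup A ℂ)
    (μ : Matrix (B × A) (B × A) ℂ) (ρ : Matrix A A ℂ)
    (hμ : ((UB : Matrix B B ℂ) ⊗ₖ (U : Matrix A A ℂ)) * μ *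
        ((UB : Matrix B B ℂ) ⊗ₖ (U : Matrix A A ℂ))ᴴ = μ)
    (hρ : (U : Matrix A A ℂ) * ρ * (U : Matrix A A ℂ)ᴴ = ρ)
    (hφ : ((U : Matrix A A ℂ) ⊗ₖ (U : Matrix A A ℂ)).mulVec (choiVec A) = choiVec A) :
    (UB : Matrix B B ℂ) * linkState μ ρ * (UB : Matrix B B ℂ)ᴴ = linkState μ ρ := by
  set V : Matrix A A ℂ := (U : Matrix A A ℂ) with hV
  set W : Matrix B B ℂ := (UB : Matrix B B ℂ) with hW
  have hVstar : Vᴴ * V = 1 := by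
    simpa [Matrix.star_eq_conjTranspose] using U.2.1
  -- From the Choi vector invariance, V * Vᵀ = 1.
  have hVVt : V * Vᵀ = 1 := by
    ext a a'
    have h := congrFun hφ (a, a')
    simp only [Matrix.mulVec, dotProduct, choiVec, Matrix.kroneckerMap_apply,
      Fintype.sum_prod_type, mul_ite, mul_one, mul_zero, Finset.sum_ite_eq, Finset.sum_ite_eq',
      Finset.sum_ite_irrel, Finset.sum_const_zero, Finset.mem_univ, if_true] at h
    simpa [Matrix.mul_apply, Matrix.one_apply] using h
  -- Hence Vᵀ = Vᴴ and (Vᴴ)ᵀ = V.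
  have hT : Vᵀ = Vᴴ := by
    calc Vᵀ = (Vᴴ * V) * Vᵀ := by rw [hVstar, one_mul]
    _ = Vᴴ * (V * Vᵀ) := by rw [mul_assoc]
    _ = Vᴴ := by rw [hVVt, mul_one]
  have hTT : (Vᴴ)ᵀ = V := by rw [← hT, Matrix.transpose_transpose]
  have hρ' : Vᴴ * ρ * V = ρ := by
    calc Vᴴ * ρ * V = Vᴴ * (V * ρ * Vᴴ) * V := by rw [hρ]
    _ = (Vᴴ * V) * ρ * (Vᴴ * V) := by simp only [mul_assoc]
    _ = ρ := by rw [hVstar, one_mul, mul_one]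
  have key : linkState μ ρ = W * linkState μ ρ * Wᴴ := by
    conv_lhs => rw [← hμ]
    have hdec : W ⊗ₖ V = (W ⊗ₖ (1 : Matrix A A ℂ)) * ((1 : Matrix B B ℂ) ⊗ₖ V) := by
      rw [← Matrix.mul_kronecker_mul, mul_one, one_mul]
    have hdec' : (W ⊗ₖ V)ᴴ = ((1 : Matrix B B ℂ) ⊗ₖ Vᴴ) * (Wᴴ ⊗ₖ (1 : Matrix A A ℂ)) := by
      rw [kron_conjT, ← Matrix.mul_kronecker_mul, mul_one, one_mul]
    rw [hdec', hdec]
    have reassoc : (W ⊗ₖ (1 : Matrix A A ℂ)) * ((1 : Matrix B B ℂ) ⊗ₖ V) * μ *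
        (((1 : Matrix B B ℂ) ⊗ₖ Vᴴ) * (Wᴴ ⊗ₖ (1 : Matrix A A ℂ))) =
        (W ⊗ₖ (1 : Matrix A A ℂ)) * ((((1 : Matrix B B ℂ) ⊗ₖ V) * μ *
          ((1 : Matrix B B ℂ) ⊗ₖ Vᴴ)) * (Wᴴ ⊗ₖ (1 : Matrix A A ℂ))) := by
      simp only [mul_assoc]
    rw [reassoc, lA, lB, lD, lC, hT, hTT, ← mul_assoc Vᴴ ρ V, hρ', mul_assoc]
  exact key.symm
end

section
/- Let A₁, A₂, B₁, B₂ be finite types. Let μ : Matrix ((A₂ × B₂) × (A₁ × B₁)) ((A₂ × B₂) × (A₁ × B₁)) ℂ be separable across the A:B split, i.e., there exist a finite index type ι, nonnegative reals p : ι → ℝ, positive semidefinite matrices X : ι → Matrix (A₂ × A₁) (A₂ × A₁) ℂ and Y : ι → Matrix (B₂ × B₁) (B₂ × B₁) ℂ such that for all indices, μ ((a₂,b₂),(a₁,b₁)) ((a₂',b₂'),(a₁',b₁')) = ∑ j, (p j : ℂ) * X j (a₂,a₁) (a₂',a₁') * Y j (b₂,b₁) (b₂',b₁'). Let ρ : Matrix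 (A₁ × B₁) (A₁ × B₁) ℂ be separable: there exist a finite index type κ, nonnegative reals q : κ → ℝ, and positive semidefinite R : κ → Matrix A₁ A₁ ℂ, S : κ → Matrix B₁ B₁ ℂ with ρ = ∑ k, (q k : ℂ) • (R k ⊗ₖ S k). Then the link product μ ⋆ ρ : Matrix (A₂ × B₂) (A₂ × B₂) ℂ is separable: there exist a finite index type ι', nonnegative reals r : ι' → ℝ, and positive semidefinite matrices P : ι' → Matrix A₂ A₂ ℂ, Q : ι' → Matrix B₂ B₂ ℂ such that μ ⋆ ρ = ∑ l, (r l : ℂ) • (P l ⊗ₖ Q l). (Separable states are closed under the link product; this makes the resource theory of separable entanglement Choi-defined.) -/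
open Matrix Kronecker BigOperators
open scoped ComplexOrder

/-!
The link product is bilinear, and on product operators it factorises:
`(X ⊗ Y) ⋆ (R ⊗ S) = (X ⋆ R) ⊗ (Y ⋆ S)`. It also preserves positivity, because
`N ⋆ ρ = Wᴴ (N ⊗ ρ) W` for the fixed matrix `W` of `|s⟩ ↦ ∑ₜ |s, t⟩ ⊗ |t⟩`.
Hence `μ ⋆ ρ = ∑ⱼₖ pⱼ qₖ (Xⱼ ⋆ Rₖ) ⊗ (Yⱼ ⋆ Sₖ)` is again a nonnegative combination of
products of positive semidefinite matrices.
-/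

section LinkState

variable {S T : Type*} [Fintype T]

noncomputable def linkStateBilin :
    Matrix (S × T) (S × T) ℂ →ₗ[ℂ] Matrix T T ℂ →ₗ[ℂ] Matrix S S ℂ :=
  LinearMap.mk₂ ℂ linkState
    (fun N₁ N₂ ρ => by ext; simp [linkState, add_mul, Finset.sum_add_distrib])
    (fun c N ρ => by ext; simp [linkState, Finset.mul_sum, mul_assoc])
    (fun N ρ₁ ρ₂ => by ext; simp [linkState, mul_add, Finset.sum_add_distrib])
    (fun c N ρ => by ext; simp [linkState, Finset.mul_sum, mul_left_comm])

theorem linkStateBilin_apply (N : Matrix (S × T) (S × T) ℂ) (ρ : Matrix T T ℂ) :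
    linkStateBilin N ρ = linkState N ρ :=
  rfl

variable (S T) in
def entangledEmbedding [DecidableEq S] [DecidableEq T] : Matrix ((S × T) × T) S ℂ :=
  Matrix.of fun x s => if x.1 = (s, x.2) then 1 else 0

theorem linkState_eq_conjTranspose_mul_kronecker_mul [Fintype S] [DecidableEq S] [DecidableEq T]
    (N : Matrix (S × T) (S × T) ℂ) (ρ : Matrix T T ℂ) :
    linkState N ρ = (entangledEmbedding S T)ᴴ * (N ⊗ₖ ρ) * entangledEmbedding S T := by
  ext s s'
  rw [linkState, of_apply, Finset.sum_comm]
  simp [entangledEmbedding, mul_apply, Fintype.sum_prod_type, Prod.ext_iff, ite_and,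
    apply_ite (starRingEnd ℂ), ite_mul]

theorem Matrix.PosSemidef.linkState [Fintype S] {N : Matrix (S × T) (S × T) ℂ}
    {ρ : Matrix T T ℂ} (hN : N.PosSemidef) (hρ : ρ.PosSemidef) : (linkState N ρ).PosSemidef := by
  classical
  rw [linkState_eq_conjTranspose_mul_kronecker_mul]
  exact (hN.kronecker hρ).conjTranspose_mul_mul_same _

end LinkState

theorem linkState_reindex_kronecker {A₁ A₂ B₁ B₂ : Type*} [Fintype A₁] [Fintype B₁]
    (X : Matrix (A₂ × A₁) (A₂ × A₁) ℂ) (Y : Matrix (B₂ × B₁) (B₂ × B₁) ℂ)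
    (R : Matrix A₁ A₁ ℂ) (S : Matrix B₁ B₁ ℂ) :
    linkState (reindex (Equiv.prodProdProdComm A₂ A₁ B₂ B₁) (Equiv.prodProdProdComm A₂ A₁ B₂ B₁)
      (X ⊗ₖ Y)) (R ⊗ₖ S) = linkState X R ⊗ₖ linkState Y S := by
  ext ⟨a₂, b₂⟩ ⟨a₂', b₂'⟩
  simp [linkState, Fintype.sum_prod_type, Finset.sum_mul_sum, mul_mul_mul_comm]

def Matrix.IsSeparable {A B : Type*} (M : Matrix (A × B) (A × B) ℂ) : Prop :=
  ∃ (n : ℕ) (r : Fin n → ℝ) (P : Fin n → Matrix A A ℂ) (Q : Fin n → Matrix B B ℂ),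
    (∀ l, 0 ≤ r l) ∧ (∀ l, (P l).PosSemidef) ∧ (∀ l, (Q l).PosSemidef) ∧
      M = ∑ l, (r l : ℂ) • (P l ⊗ₖ Q l)

theorem Matrix.isSeparable_of_eq_sum {A B ι : Type*} [Fintype ι] {M : Matrix (A × B) (A × B) ℂ}
    (r : ι → ℝ) (P : ι → Matrix A A ℂ) (Q : ι → Matrix B B ℂ) (hr : ∀ i, 0 ≤ r i)
    (hP : ∀ i, (P i).PosSemidef) (hQ : ∀ i, (Q i).PosSemidef)
    (hM : M = ∑ i, (r i : ℂ) • (P i ⊗ₖ Q i)) : M.IsSeparable := by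
  let e := (Fintype.equivFin ι).symm
  refine ⟨Fintype.card ι, r ∘ e, P ∘ e, Q ∘ e, fun _ => hr _, fun _ => hP _, fun _ => hQ _, ?_⟩
  rw [hM]
  exact (Fintype.sum_equiv e _ _ fun _ => rfl).symm

theorem stmt11 {A₁ A₂ B₁ B₂ : Type*} [Fintype A₁] [Fintype A₂] [Fintype B₁] [Fintype B₂]
    (μ : Matrix ((A₂ × B₂) × (A₁ × B₁)) ((A₂ × B₂) × (A₁ × B₁)) ℂ)
    (ι : Type) [Fintype ι] (p : ι → ℝ) (hp : ∀ j, 0 ≤ p j)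
    (X : ι → Matrix (A₂ × A₁) (A₂ × A₁) ℂ) (hX : ∀ j, (X j).PosSemidef)
    (Y : ι → Matrix (B₂ × B₁) (B₂ × B₁) ℂ) (hY : ∀ j, (Y j).PosSemidef)
    (hμ : ∀ (a₂ : A₂) (b₂ : B₂) (a₁ : A₁) (b₁ : B₁)
        (a₂' : A₂) (b₂' : B₂) (a₁' : A₁) (b₁' : B₁),
      μ ((a₂, b₂), (a₁, b₁)) ((a₂', b₂'), (a₁', b₁')) =
        ∑ j, (p j : ℂ) * X j (a₂, a₁) (a₂', a₁') * Y j (b₂, b₁) (b₂', b₁'))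
    (ρ : Matrix (A₁ × B₁) (A₁ × B₁) ℂ)
    (κ : Type) [Fintype κ] (q : κ → ℝ) (hq : ∀ k, 0 ≤ q k)
    (R : κ → Matrix A₁ A₁ ℂ) (hR : ∀ k, (R k).PosSemidef)
    (S : κ → Matrix B₁ B₁ ℂ) (hS : ∀ k, (S k).PosSemidef)
    (hρ : ρ = ∑ k, (q k : ℂ) • (R k ⊗ₖ S k)) :
    ∃ (n : ℕ) (r : Fin n → ℝ) (P : Fin n → Matrix A₂ A₂ ℂ) (Q : Fin n → Matrix B₂ B₂ ℂ),
      (∀ l, 0 ≤ r l) ∧ (∀ l, (P l).PosSemidef) ∧ (∀ l, (Q l).PosSemidef) ∧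
        linkState μ ρ = ∑ l, (r l : ℂ) • (P l ⊗ₖ Q l) := by
  set e := Equiv.prodProdProdComm A₂ A₁ B₂ B₁
  have hμ_sum : μ = ∑ j, (p j : ℂ) • reindex e e (X j ⊗ₖ Y j) := by
    ext ⟨⟨a₂, b₂⟩, a₁, b₁⟩ ⟨⟨a₂', b₂'⟩, a₁', b₁'⟩
    simp [e, hμ, Matrix.sum_apply, mul_assoc]
  have hlink : linkState μ ρ = ∑ jk : ι × κ, ((p jk.1 * q jk.2 : ℝ) : ℂ) •
      (linkState (X jk.1) (R jk.2) ⊗ₖ linkState (Y jk.1) (S jk.2)) := by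
    rw [hμ_sum, hρ, ← linkStateBilin_apply]
    simp only [map_sum, map_smul, LinearMap.sum_apply, LinearMap.smul_apply, linkStateBilin_apply,
      e, linkState_reindex_kronecker, Finset.smul_sum, smul_smul, Fintype.sum_prod_type,
      Complex.ofReal_mul]
    rw [Finset.sum_comm]
    exact Finset.sum_congr rfl fun j _ => Finset.sum_congr rfl fun k _ => by rw [mul_comm]
  exact isSeparable_of_eq_sum _ _ _ (fun _ => mul_nonneg (hp _) (hq _))
    (fun _ => (hX _).linkState (hR _)) (fun _ => (hY _).linkState (hS _)) hlink
end

section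
/- Let A, B be finite types. If X : Matrix (B × A) (B × A) ℂ is positive semidefinite and ρ : Matrix A A ℂ is positive semidefinite, then the link product X ⋆ ρ : Matrix B B ℂ is positive semidefinite. (Equivalently: the map M ↦ tr₂ (M * (1 ⊗ₖ ρᵀ)) sends positive semidefinite matrices to positive semidefinite matrices, so a channel applied via its Choi matrix to a state yields a positive matrix.) -/
/-!
Write `ρ = ∑ᵢ vᵢ vᵢᴴ`. The link product is linear in `ρ`, and `X ⋆ (v vᴴ) = Eᴴ X E` with
`E = 1 ⊗ v̄`, a congruence of `X`; so `X ⋆ ρ` is a sum of positive semidefinite matrices.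
-/

open Matrix Kronecker BigOperators
open scoped ComplexOrder

lemma linkState_sum {S T ι : Type*} [Fintype T] (N : Matrix (S × T) (S × T) ℂ) (s : Finset ι)
    (ρ : ι → Matrix T T ℂ) : linkState N (∑ i ∈ s, ρ i) = ∑ i ∈ s, linkState N (ρ i) := by
  ext x y
  simp only [linkState, of_apply, Matrix.sum_apply, Finset.mul_sum]
  exact (Finset.sum_congr rfl fun _ _ => Finset.sum_comm).trans Finset.sum_comm

section oneKroneckerVec

variable {S T R α : Type*} [DecidableEq S]

variable (S) in
/-- The matrix `1 ⊗ₖ w` for a column vector `w`, with the trivial column index dropped. -/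
def oneKroneckerVec [Zero α] (w : T → α) : Matrix (S × T) S α :=
  Matrix.of fun p s => if p.1 = s then w p.2 else 0

variable [Fintype S] [Fintype T] [NonUnitalNonAssocSemiring α]

lemma mul_oneKroneckerVec_apply (M : Matrix R (S × T) α) (w : T → α) (r : R) (s : S) :
    (M * oneKroneckerVec S w) r s = ∑ t, M r (s, t) * w t := by
  simp [oneKroneckerVec, mul_apply, Fintype.sum_prod_type]

lemma conjTranspose_oneKroneckerVec_mul_apply [StarRing α] (M : Matrix (S × T) R α) (w : T → α)
    (s : S) (r : R) :
    ((oneKroneckerVec S w)ᴴ * M) s r = ∑ t, star (w t) * M (s, t) r := by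
  simp [oneKroneckerVec, mul_apply, Fintype.sum_prod_type, apply_ite]

end oneKroneckerVec

lemma linkState_vecMulVec {S T : Type*} [Fintype S] [Fintype T] [DecidableEq S]
    (N : Matrix (S × T) (S × T) ℂ) (v : T → ℂ) :
    linkState N (vecMulVec v (star v)) =
      (oneKroneckerVec S (star v))ᴴ * N * oneKroneckerVec S (star v) := by
  ext s s'
  simp only [linkState, of_apply, vecMulVec_apply, mul_oneKroneckerVec_apply,
    conjTranspose_oneKroneckerVec_mul_apply, Pi.star_apply, star_star, Finset.sum_mul]
  rw [Finset.sum_comm]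
  congr! 2 with t _ t' _
  ring

theorem stmt13 {A B : Type*} [Fintype A] [Fintype B]
    (X : Matrix (B × A) (B × A) ℂ) (ρ : Matrix A A ℂ)
    (hX : X.PosSemidef) (hρ : ρ.PosSemidef) :
    (linkState X ρ).PosSemidef := by
  classical
  obtain ⟨m, v, rfl⟩ := posSemidef_iff_eq_sum_vecMulVec.mp hρ
  rw [linkState_sum]
  refine posSemidef_sum _ fun i _ => ?_
  rw [linkState_vecMulVec]
  exact hX.conjTranspose_mul_mul_same _
end

section
/- Let A, B be nonempty finite types with d_A = Fintype.card A. Call a vector v : ι → ℂ 'free' if every entry has nonnegative real part and zero imaginary part, and ∑ i, ‖v i‖^2 = 1. Let μ : Matrix (B × A) (B × A) ℂ admit a decomposition μ = ∑ α, (p α : ℂ) • Matrix.vecMulVec (v α) (star (v α)) over a finite index type, with p α ≥ 0, ∑ α, p α = 1, and each v α : B × A → ℂ free; assume moreover the marginal condition tr₁ μ = (d_A : ℂ)⁻¹ • (1 : Matrix A A ℂ). Let ρ : Matrix A A ℂ admit a decomposition ρ = ∑ β, (q β : ℂ) • Matrix.vecMulVec (w β) (star (w β)) over a finite index type, with q β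 ≥ 0, ∑ β, q β = 1, and each w β : A → ℂ free. Then there exist a finite index type κ, reals s : κ → ℝ with s k ≥ 0 and ∑ k, s k = 1, and free vectors u : κ → (B → ℂ) such that (d_A : ℂ) • (μ ⋆ ρ) = ∑ k, (s k : ℂ) • Matrix.vecMulVec (u k) (star (u k)). (States with non-negative amplitudes are closed under the renormalized link product; this makes the resource theory of non-negativity of quantum amplitudes Choi-defined.) -/
open Matrix Kronecker BigOperators

/-- A vector is free (for the resource theory of non-negativity of amplitudes) if all
its entries are nonnegative reals and it is normalized. -/
def FreeVec {ι : Type*} [Fintype ι] (v : ι → ℂ) : Prop :=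
  (∀ i, 0 ≤ (v i).re ∧ (v i).im = 0) ∧ ∑ i, ‖v i‖ ^ 2 = 1

/-! For pure states the link product is again pure: `|v⟩⟨v| ⋆ |w⟩⟨w| = |F⟩⟨F|` with
`F b = ∑ a, v (b, a) * w a`, and `F` has non-negative real entries when `v` and `w` do. By
bilinearity `μ ⋆ ρ` is a non-negative combination of such `|F⟩⟨F|`; normalizing each `F` makes
it a non-negative combination of free pure states. The weights of `d_A • (μ ⋆ ρ)` sum to its
trace, which the marginal condition reduces to `d_A • d_A⁻¹ • tr ρ = 1`. -/

open scoped ComplexOrder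

def linkVec {S T : Type*} [Fintype T] (v : S × T → ℂ) (w : T → ℂ) : S → ℂ :=
  fun s => ∑ t, v (s, t) * w t

section LinkProduct

variable {S T : Type*} [Fintype T]

lemma linkState_sum_smul_left {ι : Type*} [Fintype ι] (c : ι → ℂ)
    (N : ι → Matrix (S × T) (S × T) ℂ) (ρ : Matrix T T ℂ) :
    linkState (∑ i, c i • N i) ρ = ∑ i, c i • linkState (N i) ρ := by
  ext s s'
  simp only [linkState, of_apply, Matrix.sum_apply, Matrix.smul_apply, smul_eq_mul,
    Finset.sum_mul, Finset.mul_sum, mul_assoc]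
  exact (Finset.sum_congr rfl fun _ _ => Finset.sum_comm).trans Finset.sum_comm

lemma linkState_sum_smul_right {ι : Type*} [Fintype ι] (c : ι → ℂ)
    (N : Matrix (S × T) (S × T) ℂ) (ρ : ι → Matrix T T ℂ) :
    linkState N (∑ i, c i • ρ i) = ∑ i, c i • linkState N (ρ i) := by
  ext s s'
  simp only [linkState, of_apply, Matrix.sum_apply, Matrix.smul_apply, smul_eq_mul,
    Finset.mul_sum, mul_left_comm (N _ _)]
  exact (Finset.sum_congr rfl fun _ _ => Finset.sum_comm).trans Finset.sum_comm

lemma linkState_vecMulVec_s14 (v v' : S × T → ℂ) (w w' : T → ℂ) :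
    linkState (vecMulVec v v') (vecMulVec w w') = vecMulVec (linkVec v w) (linkVec v' w') := by
  ext s s'
  simp only [linkState, linkVec, of_apply, vecMulVec_apply, Finset.sum_mul_sum]
  exact Finset.sum_congr rfl fun _ _ => Finset.sum_congr rfl fun _ _ => by ring

lemma star_linkVec (v : S × T → ℂ) (w : T → ℂ) :
    star (linkVec v w) = linkVec (star v) (star w) := by
  ext s
  simp [linkVec, mul_comm]

lemma linkVec_nonneg {v : S × T → ℂ} {w : T → ℂ} (hv : 0 ≤ v) (hw : 0 ≤ w) :
    0 ≤ linkVec v w :=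
  fun s => Finset.sum_nonneg fun t _ => mul_nonneg (hv (s, t)) (hw t)

lemma trace_linkState_of_tr₁_eq_smul_one [Fintype S] [DecidableEq T]
    {N : Matrix (S × T) (S × T) ℂ} {c : ℂ} (hN : tr₁ N = c • 1) (ρ : Matrix T T ℂ) :
    trace (linkState N ρ) = c * trace ρ := by
  have h : trace (linkState N ρ) = ∑ t, ∑ t', tr₁ N t t' * ρ t t' := by
    simp only [trace, diag, linkState, tr₁, of_apply, Finset.sum_mul]
    rw [Finset.sum_comm]
    exact Finset.sum_congr rfl fun _ _ => Finset.sum_comm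
  rw [h, hN]
  simp [one_apply, trace, Finset.mul_sum]

end LinkProduct

section FreeVec

variable {ι : Type*} [Fintype ι]

lemma freeVec_iff {v : ι → ℂ} : FreeVec v ↔ 0 ≤ v ∧ ∑ i, ‖v i‖ ^ 2 = 1 :=
  and_congr_left' <| forall_congr' fun _ =>
    (Complex.nonneg_iff.trans (and_congr_right' eq_comm)).symm

lemma freeVec_single [DecidableEq ι] (i : ι) : FreeVec (Pi.single i 1 : ι → ℂ) := by
  refine freeVec_iff.2 ⟨Pi.single_nonneg.2 zero_le_one, ?_⟩
  simp [Pi.single_apply, apply_ite (‖·‖ ^ 2)]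

lemma dotProduct_star_eq_sum_norm_sq (v : ι → ℂ) :
    v ⬝ᵥ star v = ((∑ i, ‖v i‖ ^ 2 : ℝ) : ℂ) := by
  simp [dotProduct, Complex.mul_conj']

lemma trace_sum_smul_vecMulVec_star {σ : Type*} [Fintype σ] (s : σ → ℝ) {u : σ → ι → ℂ}
    (hu : ∀ k, FreeVec (u k)) :
    trace (∑ k, (s k : ℂ) • vecMulVec (u k) (star (u k))) = ∑ k, s k := by
  simp [trace_sum, trace_smul, dotProduct_star_eq_sum_norm_sq, (hu _).2]

lemma exists_freeVec_vecMulVec_eq [Nonempty ι] {u : ι → ℂ} (hu : 0 ≤ u) :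
    ∃ f, FreeVec f ∧
      vecMulVec u (star u) = ((∑ i, ‖u i‖ ^ 2 : ℝ) : ℂ) • vecMulVec f (star f) := by
  classical
  obtain ⟨N, hN⟩ : ∃ N, ∑ i, ‖u i‖ ^ 2 = N := ⟨_, rfl⟩
  rw [hN]
  rcases (hN ▸ Finset.sum_nonneg fun i _ => sq_nonneg ‖u i‖ : 0 ≤ N).eq_or_lt with rfl | hNpos
  · have hu0 : u = 0 := funext fun i => by
      simpa using (Finset.sum_eq_zero_iff_of_nonneg fun i _ => sq_nonneg ‖u i‖).1 hN i
        (Finset.mem_univ i)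
    exact ⟨_, freeVec_single (Classical.arbitrary ι), by simp [hu0]⟩
  · have hr : N * ((√N)⁻¹ * (√N)⁻¹) = 1 := by
      rw [← mul_inv, Real.mul_self_sqrt hNpos.le, mul_inv_cancel₀ hNpos.ne']
    refine ⟨(√N)⁻¹ • u, freeVec_iff.2 ⟨smul_nonneg (by positivity) hu, ?_⟩, ?_⟩
    · simp only [Pi.smul_apply, norm_smul, mul_pow, Real.norm_eq_abs, sq_abs, inv_pow,
        Real.sq_sqrt hNpos.le, ← Finset.mul_sum, hN, inv_mul_cancel₀ hNpos.ne']
    · rw [star_smul, star_trivial (√N)⁻¹, smul_vecMulVec, vecMulVec_smul, smul_smul,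
        Complex.coe_smul, smul_smul, hr, one_smul]

end FreeVec

def IsFreeMixture {ι : Type*} [Fintype ι] (M : Matrix ι ι ℂ) : Prop :=
  ∃ (n : ℕ) (s : Fin n → ℝ) (u : Fin n → (ι → ℂ)),
    (∀ k, 0 ≤ s k) ∧ (∑ k, s k = 1) ∧ (∀ k, FreeVec (u k)) ∧
      M = ∑ k, (s k : ℂ) • vecMulVec (u k) (star (u k))

lemma isFreeMixture_of_trace_eq_one {ι σ : Type*} [Fintype ι] [Fintype σ] {M : Matrix ι ι ℂ}
    {s : σ → ℝ} {u : σ → ι → ℂ} (hs : ∀ k, 0 ≤ s k) (hu : ∀ k, FreeVec (u k))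
    (hM : M = ∑ k, (s k : ℂ) • vecMulVec (u k) (star (u k))) (htr : trace M = 1) :
    IsFreeMixture M := by
  let e := (Fintype.equivFin σ).symm
  refine ⟨Fintype.card σ, s ∘ e, u ∘ e, fun k => hs (e k), ?_, fun k => hu (e k), ?_⟩
  · rw [hM, trace_sum_smul_vecMulVec_star s hu, Complex.ofReal_eq_one] at htr
    exact (e.sum_comp s).trans htr
  · rw [hM]
    exact (e.sum_comp fun k => (s k : ℂ) • vecMulVec (u k) (star (u k))).symm

theorem stmt14_general {A B : Type*} [Fintype A] [Fintype B] [Nonempty A] [Nonempty B]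
    [DecidableEq A]
    (μ : Matrix (B × A) (B × A) ℂ)
    (ι : Type) [Fintype ι] (p : ι → ℝ) (hp : ∀ α, 0 ≤ p α)
    (v : ι → (B × A → ℂ)) (hv : ∀ α, FreeVec (v α))
    (hμ : μ = ∑ α, (p α : ℂ) • Matrix.vecMulVec (v α) (star (v α)))
    (hmarg : tr₁ μ = (Fintype.card A : ℂ)⁻¹ • (1 : Matrix A A ℂ))
    (ρ : Matrix A A ℂ)
    (κ : Type) [Fintype κ] (q : κ → ℝ) (hq : ∀ β, 0 ≤ q β) (hq1 : ∑ β, q β = 1)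
    (w : κ → (A → ℂ)) (hw : ∀ β, FreeVec (w β))
    (hρ : ρ = ∑ β, (q β : ℂ) • Matrix.vecMulVec (w β) (star (w β))) :
    ∃ (n : ℕ) (s : Fin n → ℝ) (u : Fin n → (B → ℂ)),
      (∀ k, 0 ≤ s k) ∧ (∑ k, s k = 1) ∧ (∀ k, FreeVec (u k)) ∧
        (Fintype.card A : ℂ) • linkState μ ρ =
          ∑ k, (s k : ℂ) • Matrix.vecMulVec (u k) (star (u k)) := by
  let F : ι × κ → B → ℂ := fun m => linkVec (v m.1) (w m.2)
  have hF : ∀ m, 0 ≤ F m := fun m =>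
    linkVec_nonneg (freeVec_iff.1 (hv m.1)).1 (freeVec_iff.1 (hw m.2)).1
  choose f hf hFf using fun m => exists_freeVec_vecMulVec_eq (hF m)
  have hlink : linkState μ ρ =
      ∑ m : ι × κ, ((p m.1 * q m.2 : ℝ) : ℂ) • vecMulVec (F m) (star (F m)) := by
    simp only [hμ, hρ, linkState_sum_smul_left, linkState_sum_smul_right, linkState_vecMulVec_s14,
      F, star_linkVec, Finset.smul_sum, smul_smul, Fintype.sum_prod_type, Complex.ofReal_mul]
    rw [Finset.sum_comm]
    simp only [mul_comm]
  have htrρ : trace ρ = 1 := by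
    rw [hρ, trace_sum_smul_vecMulVec_star q hw, hq1, Complex.ofReal_one]
  refine isFreeMixture_of_trace_eq_one
    (s := fun m => Fintype.card A * (p m.1 * q m.2 * ∑ b, ‖F m b‖ ^ 2)) (fun m => ?_) hf ?_ ?_
  · have := hp m.1; have := hq m.2; positivity
  · rw [hlink, Finset.smul_sum]
    refine Finset.sum_congr rfl fun m _ => ?_
    rw [hFf, smul_smul, smul_smul]
    congr 1
    push_cast
    ring
  · rw [trace_smul, trace_linkState_of_tr₁_eq_smul_one hmarg, htrρ, smul_eq_mul, mul_one,
      mul_inv_cancel₀ (by positivity)]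

theorem stmt14 {A B : Type*} [Fintype A] [Fintype B] [Nonempty A] [Nonempty B]
    [DecidableEq A] [DecidableEq B]
    (μ : Matrix (B × A) (B × A) ℂ)
    (ι : Type) [Fintype ι] (p : ι → ℝ) (hp : ∀ α, 0 ≤ p α) (hp1 : ∑ α, p α = 1)
    (v : ι → (B × A → ℂ)) (hv : ∀ α, FreeVec (v α))
    (hμ : μ = ∑ α, (p α : ℂ) • Matrix.vecMulVec (v α) (star (v α)))
    (hmarg : tr₁ μ = (Fintype.card A : ℂ)⁻¹ • (1 : Matrix A A ℂ))
    (ρ : Matrix A A ℂ)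
    (κ : Type) [Fintype κ] (q : κ → ℝ) (hq : ∀ β, 0 ≤ q β) (hq1 : ∑ β, q β = 1)
    (w : κ → (A → ℂ)) (hw : ∀ β, FreeVec (w β))
    (hρ : ρ = ∑ β, (q β : ℂ) • Matrix.vecMulVec (w β) (star (w β))) :
    ∃ (n : ℕ) (s : Fin n → ℝ) (u : Fin n → (B → ℂ)),
      (∀ k, 0 ≤ s k) ∧ (∑ k, s k = 1) ∧ (∀ k, FreeVec (u k)) ∧
        (Fintype.card A : ℂ) • linkState μ ρ =
          ∑ k, (s k : ℂ) • Matrix.vecMulVec (u k) (star (u k)) :=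
  stmt14_general μ ι p hp v hv hμ hmarg ρ κ q hq hq1 w hw hρ
end
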